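/- arXiv:2604.13635 — 3 statements merged into one kernel-verified Lean document; each statement's English description precedes it below -/
import Mathlib

section
/- Let (X, d) be a metric space, let ξ > 0 and R ≥ 0 be real numbers, and let l, l', l̂ ∈ X be points with d(l, l̂) ≤ R and d(l', l̂) ≤ R. Then 1 + ξ·(R − d(l, l̂)) ≤ exp(ξ · d(l, l')) · (1 + ξ·(R − d(l', l̂))). (This is the ε-Geo-Indistinguishability guarantee of the location obfuscation mechanism, with privacy level ε = ξ: the likelihood of producing the obfuscated location l̂ from true location l exceeds that from true location l' by a factor of at most e^{ξ·d(l,l')}.) -/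
/-- ε-Geo-Indistinguishability of the LOSA location obfuscation mechanism:
the (unnormalized) likelihood weight `1 + ξ·(R − d(l, l̂))` of producing the
obfuscated location `l̂` from true location `l` exceeds that from `l'` by a
factor of at most `e^{ξ·d(l,l')}`. -/
theorem geo_indistinguishability {X : Type*} [MetricSpace X]
    (ξ R : ℝ) (hξ : 0 < ξ) (hR : 0 ≤ R)
    (l l' lhat : X) (h1 : dist l lhat ≤ R) (h2 : dist l' lhat ≤ R) :
    1 + ξ * (R - dist l lhat) ≤
      Real.exp (ξ * dist l l') * (1 + ξ * (R - dist l' lhat)) := by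
  have htri : dist l' lhat ≤ dist l l' + dist l lhat := by
    have := dist_triangle l' l lhat
    rwa [dist_comm l' l] at this
  have hexp : ξ * dist l l' + 1 ≤ Real.exp (ξ * dist l l') :=
    Real.add_one_le_exp _
  have hd : (0:ℝ) ≤ dist l l' := dist_nonneg
  nlinarith [mul_nonneg hξ.le (sub_nonneg.mpr h2), mul_nonneg (mul_nonneg hξ.le hd) (mul_nonneg hξ.le (sub_nonneg.mpr h2))]
end

section
/- In the abstract VCG setting, truthful reporting is a weakly dominant strategy for every agent: fix the reports b_i of all agents i ≠ n. Let ω* be any outcome maximizing v_n(ω) + Σ_{i≠n} b_i(ω) over ω ∈ Ω (the outcome chosen when agent n reports truthfully, b_n = v_n), and let ω' be any outcome maximizing b'_n(ω) + Σ_{i≠n} b_i(ω) over ω ∈ Ω for an arbitrary alternative report b'_n. Then v_n(ω*) − p_n(ω*) ≥ v_n(ω') − p_n(ω'), where p_n(ω) = max_{ω''∈Ω} Σ_{i≠n} b_i(ω'') − Σ_{i≠n} b_i(ω). In particular, no agent can increase its utility by misreporting its valuation. -/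
open Finset in
/-- Truthfulness (incentive compatibility) of the abstract VCG mechanism:
fixing the reports `b i` of all agents `i ≠ n`, if `ωstar` maximizes the
welfare when agent `n` reports its true valuation `v`, and `ω'` maximizes the
welfare when agent `n` reports an arbitrary alternative `bn'`, then with VCG
payments `p_n(ω) = M − Σ_{i≠n} b i ω` (where `M = max_ω Σ_{i≠n} b i ω`),
truthful reporting yields at least as much utility: no agent can increase its
utility by misreporting. -/
theorem vcg_truthful {Ω : Type*} [Fintype Ω] [Nonempty Ω]
    {I : Type*} [Fintype I] [DecidableEq I]
    (b : I → Ω → ℝ) (n : I) (v bn' : Ω → ℝ) (M : ℝ)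
    (hM : IsGreatest (Set.range fun ω => ∑ i ∈ Finset.univ.erase n, b i ω) M)
    (ωstar ω' : Ω)
    (hstar : ∀ ω, v ω + ∑ i ∈ Finset.univ.erase n, b i ω ≤
      v ωstar + ∑ i ∈ Finset.univ.erase n, b i ωstar)
    (h' : ∀ ω, bn' ω + ∑ i ∈ Finset.univ.erase n, b i ω ≤
      bn' ω' + ∑ i ∈ Finset.univ.erase n, b i ω') :
    v ω' - (M - ∑ i ∈ Finset.univ.erase n, b i ω') ≤
      v ωstar - (M - ∑ i ∈ Finset.univ.erase n, b i ωstar) := by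
  have := hstar ω'
  linarith
end

section
/- In the abstract VCG setting, suppose agent n reports truthfully (b_n = v_n) and its true valuation is nonnegative, i.e. v_n(ω) ≥ 0 for all ω ∈ Ω. Then for any outcome ω* maximizing Σ_{i∈I} b_i(ω) over ω ∈ Ω, agent n's utility is nonnegative: v_n(ω*) − p_n ≥ 0. (Individual rationality of the mechanism for truthful participants.) -/
/-- Individual rationality of the abstract VCG mechanism for truthful
participants: if agent `n` reports truthfully (`b n = v_n`) and its true
valuation is nonnegative, then for any welfare-maximizing outcome `ωstar`,
its utility `b n ωstar − p_n` is nonnegative, where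
`p_n = max_ω Σ_{i≠n} b i ω − Σ_{i≠n} b i ωstar`. -/
theorem vcg_individually_rational {Ω : Type*} [Fintype Ω] [Nonempty Ω]
    {I : Type*} [Fintype I] [DecidableEq I]
    (b : I → Ω → ℝ) (n : I) (Mminus : ℝ)
    (hpos : ∀ ω, 0 ≤ b n ω)
    (hMminus : IsGreatest (Set.range fun ω => ∑ i ∈ Finset.univ.erase n, b i ω) Mminus)
    (ωstar : Ω)
    (hstar : ∀ ω, ∑ i, b i ω ≤ ∑ i, b i ωstar) :
    0 ≤ b n ωstar - (Mminus - ∑ i ∈ Finset.univ.erase n, b i ωstar) := by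
  obtain ⟨ω', hω'⟩ := hMminus.1
  have hsplit : ∀ ω : Ω, ∑ i, b i ω = b n ω + ∑ i ∈ Finset.univ.erase n, b i ω := by
    intro ω
    rw [← Finset.add_sum_erase _ _ (Finset.mem_univ n)]
  have h1 := hstar ω'
  rw [hsplit ω', hsplit ωstar] at h1
  simp only [] at hω'
  have h2 := hpos ω'
  linarith [hω']
end
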